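/- arXiv:1008.2112 — 4 statements merged into one kernel-verified Lean document; each statement's English description precedes it below -/
import Mathlib

section
/- Every delayful resumption is committed: for all r : res, ⇕ r holds. (In the paper this is proved classically, using the instance of excluded middle stating that convergence is decidable: for all r, (∃ r', r ⇓ r') ∨ ¬(∃ r', r ⇓ r').) -/
/-! Core definitions: delayful resumptions as an M-type, strong bisimilarity,
convergence, divergence, responsiveness, committedness, weak bisimilarities. -/

abbrev state := String → ℤ

/-- Shapes of the polynomial functor for delayful resumptions. -/
inductive RShape where
  | ret (σ : state)
  | inp
  | out (v : ℤ)
  | delay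

/-- The polynomial functor X ↦ state ⊕ (ℤ → X) ⊕ (ℤ × X) ⊕ X. -/
def ResPF : PFunctor :=
  ⟨RShape, fun s => match s with
    | .ret _ => PEmpty
    | .inp => ℤ
    | .out _ => PUnit
    | .delay => PUnit⟩

/-- Delayful resumptions: the final coalgebra (M-type) of `ResPF`. -/
def Res : Type := ResPF.M

namespace Res

def ret (σ : state) : Res := PFunctor.M.mk ⟨RShape.ret σ, PEmpty.elim⟩

def inp (f : ℤ → Res) : Res := PFunctor.M.mk ⟨RShape.inp, f⟩

def out (v : ℤ) (r : Res) : Res := PFunctor.M.mk ⟨RShape.out v, fun _ => r⟩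

def delay (r : Res) : Res := PFunctor.M.mk ⟨RShape.delay, fun _ => r⟩

/-- The silently diverging resumption ⊥, satisfying ⊥ = δ ⊥. -/
def bot : Res := PFunctor.M.corec (fun _ : Unit => ⟨RShape.delay, fun _ => ()⟩) ()

end Res

/-- One step of strong bisimilarity. -/
def BisimF (R : Res → Res → Prop) (r r₁ : Res) : Prop :=
  (∃ σ, r = Res.ret σ ∧ r₁ = Res.ret σ) ∨
  (∃ f f₁, r = Res.inp f ∧ r₁ = Res.inp f₁ ∧ ∀ v, R (f v) (f₁ v)) ∨
  (∃ v a a₁, r = Res.out v a ∧ r₁ = Res.out v a₁ ∧ R a a₁) ∨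
  (∃ a a₁, r = Res.delay a ∧ r₁ = Res.delay a₁ ∧ R a a₁)

/-- Strong bisimilarity ≅: the greatest relation closed under `BisimF`. -/
def Bisim (r r₁ : Res) : Prop :=
  ∃ R : Res → Res → Prop, (∀ x y, R x y → BisimF R x y) ∧ R r r₁

/-- Convergence r ⇓ r': r converges in finitely many delay steps to a
resumption that has terminated or performs an observable action. -/
inductive Conv : Res → Res → Prop where
  | ret (σ : state) : Conv (Res.ret σ) (Res.ret σ)
  | inp {f f₁ : ℤ → Res} : (∀ v, Bisim (f v) (f₁ v)) → Conv (Res.inp f) (Res.inp f₁)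
  | out {v : ℤ} {r r₁ : Res} : Bisim r r₁ → Conv (Res.out v r) (Res.out v r₁)
  | delay {r r' : Res} : Conv r r' → Conv (Res.delay r) r'

/-- Divergence r ⇑: r silently diverges (greatest predicate with δ r ⇑ whenever r ⇑). -/
def Diverge (r : Res) : Prop :=
  ∃ P : Res → Prop, (∀ x, P x → ∃ x', x = Res.delay x' ∧ P x') ∧ P r

/-- One step of responsiveness. -/
def RespF (P : Res → Prop) (r : Res) : Prop :=
  (∃ σ, Conv r (Res.ret σ)) ∨
  (∃ f, Conv r (Res.inp f) ∧ ∀ v, P (f v)) ∨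
  (∃ v r', Conv r (Res.out v r') ∧ P r')

/-- Responsiveness ↓↓ r: the greatest predicate closed under `RespF`. -/
def Resp (r : Res) : Prop :=
  ∃ P : Res → Prop, (∀ x, P x → RespF P x) ∧ P r

/-- One step of committedness: responsiveness with a divergence option. -/
def CommF (P : Res → Prop) (r : Res) : Prop :=
  (∃ σ, Conv r (Res.ret σ)) ∨
  (∃ f, Conv r (Res.inp f) ∧ ∀ v, P (f v)) ∨
  (∃ v r', Conv r (Res.out v r') ∧ P r') ∨
  Diverge r

/-- Committedness ⇕ r: the greatest predicate closed under `CommF`. -/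
def Comm (r : Res) : Prop :=
  ∃ P : Res → Prop, (∀ x, P x → CommF P x) ∧ P r

/-- One step of (termination-sensitive) weak bisimilarity. -/
def WBisimF (R : Res → Res → Prop) (r r₁ : Res) : Prop :=
  (∃ σ, Conv r (Res.ret σ) ∧ Conv r₁ (Res.ret σ)) ∨
  (∃ f f₁, Conv r (Res.inp f) ∧ Conv r₁ (Res.inp f₁) ∧ ∀ v, R (f v) (f₁ v)) ∨
  (∃ v a a₁, Conv r (Res.out v a) ∧ Conv r₁ (Res.out v a₁) ∧ R a a₁) ∨
  (∃ a a₁, r = Res.delay a ∧ r₁ = Res.delay a₁ ∧ R a a₁)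

/-- Weak bisimilarity ≈: the greatest relation closed under `WBisimF`. -/
def WBisim (r r₁ : Res) : Prop :=
  ∃ R : Res → Res → Prop, (∀ x y, R x y → WBisimF R x y) ∧ R r r₁

/-- The inductive part ≈↓(X) of the second formulation of weak bisimilarity. -/
inductive WBisimI (X : Res → Res → Prop) : Res → Res → Prop where
  | ret (σ : state) : WBisimI X (Res.ret σ) (Res.ret σ)
  | out {v r r₁} : X r r₁ → WBisimI X (Res.out v r) (Res.out v r₁)
  | inp {f f₁} : (∀ v, X (f v) (f₁ v)) → WBisimI X (Res.inp f) (Res.inp f₁)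
  | delayL {r r₁} : WBisimI X r r₁ → WBisimI X (Res.delay r) r₁
  | delayR {r r₁} : WBisimI X r r₁ → WBisimI X r (Res.delay r₁)

/-- One step of the second (Mendler-style) formulation ≈° of weak bisimilarity. -/
def WBisimOF (R : Res → Res → Prop) (r r₁ : Res) : Prop :=
  (∃ X : Res → Res → Prop, (∀ x y, X x y → R x y) ∧ WBisimI X r r₁) ∨
  (∃ a a₁, r = Res.delay a ∧ r₁ = Res.delay a₁ ∧ R a a₁)

/-- The second formulation ≈° of weak bisimilarity (induction nested into coinduction). -/
def WBisimO (r r₁ : Res) : Prop :=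
  ∃ R : Res → Res → Prop, (∀ x y, R x y → WBisimOF R x y) ∧ R r r₁

/-- One step of classical-style weak bisimilarity. -/
def WBisimClF (R : Res → Res → Prop) (r r₁ : Res) : Prop :=
  (∃ σ, Conv r (Res.ret σ) ∧ Conv r₁ (Res.ret σ)) ∨
  (∃ v a a₁, Conv r (Res.out v a) ∧ Conv r₁ (Res.out v a₁) ∧ R a a₁) ∨
  (∃ f f₁, Conv r (Res.inp f) ∧ Conv r₁ (Res.inp f₁) ∧ ∀ v, R (f v) (f₁ v)) ∨
  (Diverge r ∧ Diverge r₁)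

/-- Classical-style weak bisimilarity ≈c. -/
def WBisimCl (r r₁ : Res) : Prop :=
  ∃ R : Res → Res → Prop, (∀ x y, R x y → WBisimClF R x y) ∧ R r r₁

/-! Take the invariant of committedness to be `True`, so only the one-step condition needs
proof, and decide classically whether `r` converges. If it does, its convergence target is
`ret`, `inp` or `out`, which is one of the first three alternatives. If it does not, `r` cannot
be `ret`, `inp` or `out` (these converge to themselves), so it is `δ r'` with `r'` again
non-convergent; non-convergence is therefore an invariant witnessing divergence. -/

lemma Res.exists_eq_ret_or_inp_or_out_or_delay (x : Res) :
    (∃ σ, x = Res.ret σ) ∨ (∃ f, x = Res.inp f) ∨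
    (∃ v a, x = Res.out v a) ∨ (∃ a, x = Res.delay a) := by
  obtain ⟨⟨s, f⟩, rfl⟩ : ∃ p, PFunctor.M.mk p = x := ⟨_, PFunctor.M.mk_dest x⟩
  cases s with
  | ret σ => exact Or.inl ⟨σ, congrArg (PFunctor.M.mk ⟨_, ·⟩) (funext nofun)⟩
  | inp => exact Or.inr (Or.inl ⟨f, rfl⟩)
  | out v => exact Or.inr (Or.inr (Or.inl ⟨v, f PUnit.unit, rfl⟩))
  | delay => exact Or.inr (Or.inr (Or.inr ⟨f PUnit.unit, rfl⟩))

lemma Bisim.refl (x : Res) : Bisim x x := by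
  refine ⟨Eq, ?_, rfl⟩
  rintro a _ rfl
  rcases a.exists_eq_ret_or_inp_or_out_or_delay with ⟨σ, rfl⟩ | ⟨f, rfl⟩ | ⟨v, r, rfl⟩ | ⟨r, rfl⟩
  · exact Or.inl ⟨σ, rfl, rfl⟩
  · exact Or.inr (Or.inl ⟨f, f, rfl, rfl, fun _ => rfl⟩)
  · exact Or.inr (Or.inr (Or.inl ⟨v, r, r, rfl, rfl, rfl⟩))
  · exact Or.inr (Or.inr (Or.inr ⟨r, r, rfl, rfl, rfl⟩))

lemma Conv.exists_eq_ret_or_inp_or_out {r r' : Res} (h : Conv r r') :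
    (∃ σ, r' = Res.ret σ) ∨ (∃ f, r' = Res.inp f) ∨ (∃ v a, r' = Res.out v a) := by
  induction h with
  | ret σ => exact Or.inl ⟨σ, rfl⟩
  | @inp _ f _ => exact Or.inr (Or.inl ⟨f, rfl⟩)
  | @out v _ a _ => exact Or.inr (Or.inr ⟨v, a, rfl⟩)
  | delay _ ih => exact ih

lemma CommF.true_of_conv {r r' : Res} (h : Conv r r') : CommF (fun _ => True) r := by
  rcases h.exists_eq_ret_or_inp_or_out with ⟨σ, rfl⟩ | ⟨f, rfl⟩ | ⟨v, a, rfl⟩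
  · exact Or.inl ⟨σ, h⟩
  · exact Or.inr (Or.inl ⟨f, h, fun _ => trivial⟩)
  · exact Or.inr (Or.inr (Or.inl ⟨v, a, h, trivial⟩))

lemma Diverge.of_not_exists_conv {r : Res} (hr : ¬∃ r', Conv r r') : Diverge r := by
  refine ⟨fun y => ¬∃ r', Conv y r', fun y hy => ?_, hr⟩
  rcases y.exists_eq_ret_or_inp_or_out_or_delay with ⟨σ, rfl⟩ | ⟨f, rfl⟩ | ⟨v, a, rfl⟩ | ⟨a, rfl⟩
  · exact absurd ⟨_, Conv.ret σ⟩ hy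
  · exact absurd ⟨_, Conv.inp fun v => Bisim.refl (f v)⟩ hy
  · exact absurd ⟨_, Conv.out (Bisim.refl a)⟩ hy
  · exact ⟨a, rfl, fun ⟨r', hr'⟩ => hy ⟨r', Conv.delay hr'⟩⟩

/-- Every delayful resumption is committed. -/
theorem every_resumption_committed : ∀ r : Res, Comm r := by
  intro r
  refine ⟨fun _ => True, fun x _ => ?_, trivial⟩
  by_cases hx : ∃ x', Conv x x'
  · obtain ⟨x', hx'⟩ := hx
    exact CommF.true_of_conv hx'
  · exact Or.inr (Or.inr (Or.inr (Diverge.of_not_exists_conv hx)))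
end

section
/- Convergence, divergence, responsiveness and committedness are setoid predicates, i.e. invariant under strong bisimilarity: if r ≅ r₁ then (i) if r ⇓ r' then there exists r₁' with r₁ ⇓ r₁' and r' ≅ r₁'; (ii) if r ⇑ then r₁ ⇑; (iii) if ↓↓ r then ↓↓ r₁; (iv) if ⇕ r then ⇕ r₁. -/
/-! Since `Res` is the M-type of `ResPF`, i.e. a final coalgebra, a strong bisimulation
relates only equal resumptions (`PFunctor.M.bisim`). Hence `r ≅ r₁` forces `r = r₁`, and
invariance of the four predicates reduces to reflexivity of `≅`, which holds because
equality is itself a strong bisimulation. -/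

theorem bisimF_eq_self (x : Res) : BisimF Eq x x := by
  induction x using PFunctor.M.casesOn' with
  | f s g =>
    cases s with
    | ret σ =>
      have hf : (PFunctor.M.mk ⟨RShape.ret σ, g⟩ : Res) = Res.ret σ :=
        congrArg (fun h => PFunctor.M.mk ⟨_, h⟩) (funext nofun)
      exact Or.inl ⟨σ, hf, hf⟩
    | inp => exact Or.inr (Or.inl ⟨g, g, rfl, rfl, fun _ => rfl⟩)
    | out v => exact Or.inr (Or.inr (Or.inl ⟨v, g (), g (), rfl, rfl, rfl⟩))
    | delay => exact Or.inr (Or.inr (Or.inr ⟨g (), g (), rfl, rfl, rfl⟩))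

namespace Bisim

theorem refl_s1 (r : Res) : Bisim r r :=
  ⟨Eq, fun x _ h => h ▸ bisimF_eq_self x, rfl⟩

theorem eq {r r₁ : Res} (h : Bisim r r₁) : r = r₁ := by
  obtain ⟨R, hR, hr⟩ := h
  refine PFunctor.M.bisim R (fun x y hxy => ?_) r r₁ hr
  rcases hR x y hxy with ⟨σ, rfl, rfl⟩ | ⟨f, f₁, rfl, rfl, hf⟩ | ⟨v, a, a₁, rfl, rfl, ha⟩ |
    ⟨a, a₁, rfl, rfl, ha⟩
  · exact ⟨.ret σ, PEmpty.elim, PEmpty.elim, rfl, rfl, nofun⟩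
  · exact ⟨.inp, f, f₁, rfl, rfl, hf⟩
  · exact ⟨.out v, fun _ => a, fun _ => a₁, rfl, rfl, fun _ => ha⟩
  · exact ⟨.delay, fun _ => a, fun _ => a₁, rfl, rfl, fun _ => ha⟩

end Bisim

/-- Convergence, divergence, responsiveness and committedness are
setoid predicates (invariant under strong bisimilarity). -/
theorem conv_div_resp_comm_setoid (r r₁ : Res) (h : Bisim r r₁) :
    (∀ r', Conv r r' → ∃ r₁', Conv r₁ r₁' ∧ Bisim r' r₁') ∧
    (Diverge r → Diverge r₁) ∧
    (Resp r → Resp r₁) ∧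
    (Comm r → Comm r₁) := by
  obtain rfl := h.eq
  exact ⟨fun r' hc => ⟨r', hc, Bisim.refl_s1 r'⟩, id, id, id⟩
end

section
/- For any resumptions r, r' and r*, if r ⇓ r' and r* ⇑, then r and r* are not weakly bisimilar: ¬(r ≈ r*). In particular, ⊥ (the resumption satisfying ⊥ = δ ⊥) is not weakly bisimilar to ret σ for any state σ. -/
namespace Res

theorem delay_injective : Function.Injective Res.delay := fun a b h => by
  obtain ⟨-, hb⟩ := Sigma.mk.inj_iff.mp (PFunctor.M.mk_inj h)
  exact congrFun (eq_of_heq hb) PUnit.unit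

theorem ret_ne_delay (σ : state) (a : Res) : Res.ret σ ≠ Res.delay a :=
  fun h => nomatch congrArg (fun r => (PFunctor.M.dest r).1) h

theorem inp_ne_delay (f : ℤ → Res) (a : Res) : Res.inp f ≠ Res.delay a :=
  fun h => nomatch congrArg (fun r => (PFunctor.M.dest r).1) h

theorem out_ne_delay (v : ℤ) (r a : Res) : Res.out v r ≠ Res.delay a :=
  fun h => nomatch congrArg (fun r => (PFunctor.M.dest r).1) h

theorem bot_eq_delay_bot : Res.bot = Res.delay Res.bot :=
  PFunctor.M.corec_def _ _

end Res

namespace Diverge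

theorem exists_eq_delay {r : Res} (h : Diverge r) : ∃ a, r = Res.delay a ∧ Diverge a := by
  obtain ⟨P, hP, hr⟩ := h
  obtain ⟨a, rfl, ha⟩ := hP r hr
  exact ⟨a, rfl, P, hP, ha⟩

theorem of_delay {a : Res} (h : Diverge (Res.delay a)) : Diverge a := by
  obtain ⟨b, hab, hb⟩ := h.exists_eq_delay
  rwa [Res.delay_injective hab]

theorem bot : Diverge Res.bot :=
  ⟨(· = Res.bot), by rintro x rfl; exact ⟨Res.bot, Res.bot_eq_delay_bot, rfl⟩, rfl⟩

end Diverge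

theorem Conv.not_diverge {r r' : Res} (h : Conv r r') : ¬ Diverge r := by
  induction h with
  | ret σ =>
    intro hd; obtain ⟨a, ha, -⟩ := hd.exists_eq_delay; exact Res.ret_ne_delay σ a ha
  | @inp f _ _ =>
    intro hd; obtain ⟨a, ha, -⟩ := hd.exists_eq_delay; exact Res.inp_ne_delay f a ha
  | @out v r _ _ =>
    intro hd; obtain ⟨a, ha, -⟩ := hd.exists_eq_delay; exact Res.out_ne_delay v r a ha
  | delay _ ih => exact fun hd => ih hd.of_delay

theorem WBisimF.swap {R : Res → Res → Prop} {r r₁ : Res} (h : WBisimF R r r₁) :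
    WBisimF (Function.swap R) r₁ r := by
  rcases h with ⟨σ, h, h₁⟩ | ⟨f, f₁, h, h₁, hf⟩ | ⟨v, a, a₁, h, h₁, ha⟩ | ⟨a, a₁, h, h₁, ha⟩
  · exact Or.inl ⟨σ, h₁, h⟩
  · exact Or.inr <| Or.inl ⟨f₁, f, h₁, h, hf⟩
  · exact Or.inr <| Or.inr <| Or.inl ⟨v, a₁, a, h₁, h, ha⟩
  · exact Or.inr <| Or.inr <| Or.inr ⟨a₁, a, h₁, h, ha⟩

theorem WBisim.symm {r r₁ : Res} (h : WBisim r r₁) : WBisim r₁ r := by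
  obtain ⟨R, hR, hr⟩ := h
  exact ⟨Function.swap R, fun x y hxy => (hR y x hxy).swap, hr⟩

/-- A weak bisimulation can relate a divergent resumption only through its fourth clause,
since the other three require both sides to converge; so divergence is transferred along it. -/
theorem Diverge.of_wbisim {r r₁ : Res} (hw : WBisim r r₁) (hd : Diverge r₁) : Diverge r := by
  obtain ⟨R, hR, hr⟩ := hw
  refine ⟨fun x => ∃ y, R x y ∧ Diverge y, fun x ⟨y, hxy, hy⟩ => ?_, r₁, hr, hd⟩
  rcases hR x y hxy with ⟨_, -, hc⟩ | ⟨_, _, -, hc, -⟩ | ⟨_, _, _, -, hc, -⟩ |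
    ⟨a, a₁, rfl, rfl, ha⟩
  · exact absurd hy hc.not_diverge
  · exact absurd hy hc.not_diverge
  · exact absurd hy hc.not_diverge
  · exact ⟨a, rfl, a₁, ha, hy.of_delay⟩

/-- If r ⇓ r' and r* ⇑ then ¬(r ≈ r*); in particular ⊥ (which
satisfies ⊥ = δ ⊥) is not weakly bisimilar to ret σ for any state σ. -/
theorem conv_diverge_not_wbisim :
    (∀ r r' rs : Res, Conv r r' → Diverge rs → ¬ WBisim r rs) ∧
    (∀ σ : state, ¬ WBisim Res.bot (Res.ret σ)) :=
  ⟨fun _ _ _ hc hd hw => hc.not_diverge (hd.of_wbisim hw),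
    fun σ hw => (Conv.ret σ).not_diverge (Diverge.bot.of_wbisim hw.symm)⟩
end

section
/- Weak bisimilarity is a setoid predicate: for any resumptions r, r', r*, r*', if r ≅ r', r ≈ r* and r* ≅ r*', then r' ≈ r*'. -/
/-! `Res` is the final coalgebra of `ResPF`, so by its coinduction principle
(`PFunctor.M.bisim`) every strong bisimulation is contained in equality. Strong
bisimilarity is therefore equality, and weak bisimilarity respects it trivially. -/

theorem BisimF.exists_dest_eq {R : Res → Res → Prop} {r r₁ : Res} (h : BisimF R r r₁) :
    ∃ (s : RShape) (g g₁ : ResPF.B s → Res), PFunctor.M.dest (F := ResPF) r = ⟨s, g⟩ ∧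
      PFunctor.M.dest (F := ResPF) r₁ = ⟨s, g₁⟩ ∧ ∀ i, R (g i) (g₁ i) := by
  rcases h with ⟨σ, rfl, rfl⟩ | ⟨f, f₁, rfl, rfl, hf⟩ | ⟨v, a, a₁, rfl, rfl, ha⟩ |
    ⟨a, a₁, rfl, rfl, ha⟩
  · exact ⟨.ret σ, PEmpty.elim, PEmpty.elim, rfl, rfl, nofun⟩
  · exact ⟨.inp, f, f₁, rfl, rfl, hf⟩
  · exact ⟨.out v, fun _ => a, fun _ => a₁, rfl, rfl, fun _ => ha⟩
  · exact ⟨.delay, fun _ => a, fun _ => a₁, rfl, rfl, fun _ => ha⟩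

theorem Bisim.eq_s4 {r r₁ : Res} (h : Bisim r r₁) : r = r₁ := by
  obtain ⟨R, hR, hr⟩ := h
  exact PFunctor.M.bisim R (fun x y hxy => BisimF.exists_dest_eq (hR x y hxy)) r r₁ hr

/-- Weak bisimilarity is a setoid predicate. -/
theorem wbisim_setoid (r r' r₁ r₁' : Res)
    (h : Bisim r r') (hw : WBisim r r₁) (h₁ : Bisim r₁ r₁') :
    WBisim r' r₁' := by
  rwa [← h.eq_s4, ← h₁.eq_s4]
end
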